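/- arXiv:2403.08253 — 3 statements merged into one kernel-verified Lean document; each statement's English description precedes it below -/
import Mathlib

section
/- Let f : ℝ → ℝ → ℝ be C^∞ (jointly smooth), let t₀ ∈ ℝ, and let u be a solution of u'(t) = f(t, u(t)) on a neighborhood of t₀ with u₀ = u(t₀). Let reals b₁,…,b₄, c₂, c₃, c₄, a_{ij} (1 ≤ j < i ≤ 4) satisfy b₁+b₂+b₃+b₄ = 1, a₂₁ = c₂, a₃₁+a₃₂ = c₃, a₄₁+a₄₂+a₄₃ = c₄, b₂c₂+b₃c₃+b₄c₄ = 1/2, b₂c₂²+b₃c₃²+b₄c₄² = 1/3, b₂c₂³+b₃c₃³+b₄c₄³ = 1/4, a₃₂b₃c₂+a₄₂b₄c₂+a₄₃b₄c₃ = 1/6, a₃₂b₃c₂c₃+a₄₂b₄c₂c₄+a₄₃b₄c₃c₄ = 1/8, a₃₂b₃c₂²+a₄₂b₄c₂²+a₄₃b₄c₃² = 1/12, a₃₂a₄₃b₄c₂ = 1/24, and let e₂, e₃, e₄ ∈ ℝ satisfy b₂c₂²e₂ + b₃c₃²e₃ + b₄c₄²e₄ = 0, b₂c₂³e₂ + b₃c₃³e₃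 + b₄c₄³e₄ = 0, and a₃₂b₃c₂²e₂ + a₄₂b₄c₂²e₂ + a₄₃b₄c₃²e₃ = 0. Define τ(h) = (u(t₀+h) − u₀)/h − (b₁k₁ + b₂k₂ + b₃k₃ + b₄k₄), where k₁ = f(t₀, u₀), k₂ = f(t₀ + c₂h, u₀·exp(−e₂(c₂h)²) + h a₂₁ k₁), k₃ = f(t₀ + c₃h, u₀·exp(−e₃(c₃h)²) + h(a₃₁k₁ + a₃₂k₂)), k₄ = f(t₀ + c₄h, u₀·exp(−e₄(c₄h)²) + h(a₄₁k₁ + a₄₂k₂ + a₄₃k₃)). Then τ(h) = O(h⁴) as h → 0; that is, the four-stage RBF Runge–Kutta method retains fourth-order accuracy. -/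
open Real Filter Asymptotics Topology
open scoped ContDiff

noncomputable def pd (v : ℝ × ℝ) (G : ℝ × ℝ → ℝ) : ℝ × ℝ → ℝ := fun p => fderiv ℝ G p v

theorem pd_contDiff {G : ℝ × ℝ → ℝ} (hG : ContDiff ℝ (⊤ : ℕ∞) G) (v : ℝ × ℝ) :
    ContDiff ℝ (⊤ : ℕ∞) (pd v G) :=
  (hG.fderiv_right (by simp)).clm_apply contDiff_const

theorem hasDerivAt_comp2 {G : ℝ × ℝ → ℝ} (hG : ContDiff ℝ (⊤ : ℕ∞) G) {a b : ℝ → ℝ} {a' b' x : ℝ}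
    (ha : HasDerivAt a a' x) (hb : HasDerivAt b b' x) :
    HasDerivAt (fun h => G (a h, b h))
      (a' * pd (1, 0) G (a x, b x) + b' * pd (0, 1) G (a x, b x)) x := by
  have h1 : HasDerivAt (fun h => G (a h, b h)) (fderiv ℝ G (a x, b x) (a', b')) x :=
    (hG.differentiable (by simp) (a x, b x)).hasFDerivAt.comp_hasDerivAt x (ha.prodMk hb)
  have h2 : ((a', b') : ℝ × ℝ) = a' • ((1 : ℝ), (0 : ℝ)) + b' • ((0 : ℝ), (1 : ℝ)) := by
    simp [Prod.ext_iff]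
  have h3 : fderiv ℝ G (a x, b x) (a', b')
      = a' * pd (1, 0) G (a x, b x) + b' * pd (0, 1) G (a x, b x) := by
    rw [h2, map_add, map_smul, map_smul]; simp [pd, smul_eq_mul]
  rwa [h3] at h1

theorem diffAt_comp2 {G : ℝ × ℝ → ℝ} (hG : ContDiff ℝ (⊤ : ℕ∞) G) {a b : ℝ → ℝ} {x : ℝ}
    (ha : DifferentiableAt ℝ a x) (hb : DifferentiableAt ℝ b x) :
    DifferentiableAt ℝ (fun h => G (a h, b h)) x :=
  (hG.differentiable (by simp) (a x, b x)).comp x (ha.prodMk hb)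

theorem contDiff_comp2 {G : ℝ × ℝ → ℝ} (hG : ContDiff ℝ (⊤ : ℕ∞) G) {a b : ℝ → ℝ}
    (ha : ContDiff ℝ (⊤ : ℕ∞) a) (hb : ContDiff ℝ (⊤ : ℕ∞) b) :
    ContDiff ℝ (⊤ : ℕ∞) (fun h => G (a h, b h)) :=
  hG.comp (ha.prodMk hb)

theorem hasDerivAt_affine (t₀ c x : ℝ) : HasDerivAt (fun h : ℝ => t₀ + c * h) c x := by
  simpa using ((hasDerivAt_id x).const_mul c).const_add t₀

theorem hasDerivAt_id_mul {g : ℝ → ℝ} {g' x : ℝ} (hg : HasDerivAt g g' x) :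
    HasDerivAt (fun h => h * g h) (g x + x * g') x := by
  simpa [Pi.mul_def] using (hasDerivAt_id' (x := x)).mul hg

/-- first derivative of `h ↦ F (t₀ + c h, y h)` -/
noncomputable def kd1 (F : ℝ × ℝ → ℝ) (t₀ c : ℝ) (y y1 : ℝ → ℝ) : ℝ → ℝ := fun h =>
  c * pd (1, 0) F (t₀ + c * h, y h) + y1 h * pd (0, 1) F (t₀ + c * h, y h)

noncomputable def kd2 (F : ℝ × ℝ → ℝ) (t₀ c : ℝ) (y y1 y2 : ℝ → ℝ) : ℝ → ℝ := fun h =>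
  c * (c * pd (1, 0) (pd (1, 0) F) (t₀ + c * h, y h)
        + y1 h * pd (0, 1) (pd (1, 0) F) (t₀ + c * h, y h))
  + (y2 h * pd (0, 1) F (t₀ + c * h, y h)
      + y1 h * (c * pd (1, 0) (pd (0, 1) F) (t₀ + c * h, y h)
          + y1 h * pd (0, 1) (pd (0, 1) F) (t₀ + c * h, y h)))

noncomputable def kd3 (F : ℝ × ℝ → ℝ) (t₀ c : ℝ) (y y1 y2 y3 : ℝ → ℝ) : ℝ → ℝ := fun h =>
  c * (c * (c * pd (1, 0) (pd (1, 0) (pd (1, 0) F)) (t₀ + c * h, y h)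
            + y1 h * pd (0, 1) (pd (1, 0) (pd (1, 0) F)) (t₀ + c * h, y h))
        + (y2 h * pd (0, 1) (pd (1, 0) F) (t₀ + c * h, y h)
            + y1 h * (c * pd (1, 0) (pd (0, 1) (pd (1, 0) F)) (t₀ + c * h, y h)
                + y1 h * pd (0, 1) (pd (0, 1) (pd (1, 0) F)) (t₀ + c * h, y h))))
  + ((y3 h * pd (0, 1) F (t₀ + c * h, y h)
      + y2 h * (c * pd (1, 0) (pd (0, 1) F) (t₀ + c * h, y h)
          + y1 h * pd (0, 1) (pd (0, 1) F) (t₀ + c * h, y h)))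
    + (y2 h * (c * pd (1, 0) (pd (0, 1) F) (t₀ + c * h, y h)
          + y1 h * pd (0, 1) (pd (0, 1) F) (t₀ + c * h, y h))
      + y1 h * (c * (c * pd (1, 0) (pd (1, 0) (pd (0, 1) F)) (t₀ + c * h, y h)
              + y1 h * pd (0, 1) (pd (1, 0) (pd (0, 1) F)) (t₀ + c * h, y h))
          + (y2 h * pd (0, 1) (pd (0, 1) F) (t₀ + c * h, y h)
              + y1 h * (c * pd (1, 0) (pd (0, 1) (pd (0, 1) F)) (t₀ + c * h, y h)
                  + y1 h * pd (0, 1) (pd (0, 1) (pd (0, 1) F)) (t₀ + c * h, y h))))))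

section ladder
variable {F : ℝ × ℝ → ℝ} {t₀ c x : ℝ} {y y1 y2 y3 : ℝ → ℝ}

theorem hd_kd0 (hF : ContDiff ℝ (⊤ : ℕ∞) F) (hy : HasDerivAt y (y1 x) x) :
    HasDerivAt (fun h => F (t₀ + c * h, y h)) (kd1 F t₀ c y y1 x) x :=
  hasDerivAt_comp2 hF (hasDerivAt_affine t₀ c x) hy

theorem hd_kd1 (hF : ContDiff ℝ (⊤ : ℕ∞) F) (hy : HasDerivAt y (y1 x) x)
    (hy1 : HasDerivAt y1 (y2 x) x) :
    HasDerivAt (kd1 F t₀ c y y1) (kd2 F t₀ c y y1 y2 x) x := by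
  exact ((hasDerivAt_comp2 (pd_contDiff hF (1,0)) (hasDerivAt_affine t₀ c x) hy).const_mul c).add
    (hy1.mul (hasDerivAt_comp2 (pd_contDiff hF (0,1)) (hasDerivAt_affine t₀ c x) hy))

theorem hd_kd2 (hF : ContDiff ℝ (⊤ : ℕ∞) F) (hy : HasDerivAt y (y1 x) x)
    (hy1 : HasDerivAt y1 (y2 x) x) (hy2 : HasDerivAt y2 (y3 x) x) :
    HasDerivAt (kd2 F t₀ c y y1 y2) (kd3 F t₀ c y y1 y2 y3 x) x := by
  have A := hasDerivAt_affine t₀ c x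
  exact ((((hasDerivAt_comp2 (pd_contDiff (pd_contDiff hF (1,0)) (1,0)) A hy).const_mul c).add
      (hy1.mul (hasDerivAt_comp2 (pd_contDiff (pd_contDiff hF (1,0)) (0,1)) A hy))).const_mul c).add
    ((hy2.mul (hasDerivAt_comp2 (pd_contDiff hF (0,1)) A hy)).add
      (hy1.mul (((hasDerivAt_comp2 (pd_contDiff (pd_contDiff hF (0,1)) (1,0)) A hy).const_mul c).add
        (hy1.mul (hasDerivAt_comp2 (pd_contDiff (pd_contDiff hF (0,1)) (0,1)) A hy)))))

theorem diffAt_kd3 (hF : ContDiff ℝ (⊤ : ℕ∞) F) (hy : DifferentiableAt ℝ y x)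
    (hy1 : DifferentiableAt ℝ y1 x)
    (hy2 : DifferentiableAt ℝ y2 x) (hy3 : DifferentiableAt ℝ y3 x) :
    DifferentiableAt ℝ (kd3 F t₀ c y y1 y2 y3) x := by
  have A : DifferentiableAt ℝ (fun h : ℝ => t₀ + c * h) x :=
    (hasDerivAt_affine t₀ c x).differentiableAt
  have P : ∀ v w z : ℝ × ℝ,
      DifferentiableAt ℝ (fun h => pd v (pd w (pd z F)) (t₀ + c * h, y h)) x :=
    fun v w z => diffAt_comp2 (pd_contDiff (pd_contDiff (pd_contDiff hF z) w) v) A hy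
  have Q : ∀ v w : ℝ × ℝ, DifferentiableAt ℝ (fun h => pd v (pd w F) (t₀ + c * h, y h)) x :=
    fun v w => diffAt_comp2 (pd_contDiff (pd_contDiff hF w) v) A hy
  have R : ∀ v : ℝ × ℝ, DifferentiableAt ℝ (fun h => pd v F (t₀ + c * h, y h)) x :=
    fun v => diffAt_comp2 (pd_contDiff hF v) A hy
  unfold kd3
  exact ((((((P _ _ _).const_mul c).add (hy1.mul (P _ _ _))).const_mul c).add
      ((hy2.mul (Q _ _)).add
        (hy1.mul (((P _ _ _).const_mul c).add (hy1.mul (P _ _ _)))))).const_mul c).add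
    (((hy3.mul (R _)).add
        (hy2.mul (((Q _ _).const_mul c).add (hy1.mul (Q _ _))))).add
      ((hy2.mul (((Q _ _).const_mul c).add (hy1.mul (Q _ _)))).add
        (hy1.mul (((((P _ _ _).const_mul c).add (hy1.mul (P _ _ _))).const_mul c).add
          ((hy2.mul (Q _ _)).add
            (hy1.mul (((P _ _ _).const_mul c).add (hy1.mul (P _ _ _)))))))))

theorem cd_kd3 (hF : ContDiff ℝ (⊤ : ℕ∞) F) (hycd : ContDiff ℝ (⊤ : ℕ∞) y) (hy1cd : ContDiff ℝ (⊤ : ℕ∞) y1)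
    (hy2cd : ContDiff ℝ (⊤ : ℕ∞) y2) (hy3cd : ContDiff ℝ (⊤ : ℕ∞) y3) :
    ContDiff ℝ (⊤ : ℕ∞) (kd3 F t₀ c y y1 y2 y3) := by
  have A : ContDiff ℝ (⊤ : ℕ∞) (fun h : ℝ => t₀ + c * h) :=
    contDiff_const.add (contDiff_const.mul contDiff_id)
  have M : ∀ {g : ℝ → ℝ}, ContDiff ℝ (⊤ : ℕ∞) g → ContDiff ℝ (⊤ : ℕ∞) (fun h => c * g h) :=
    fun hg => contDiff_const.mul hg
  have P : ∀ v w z : ℝ × ℝ,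
      ContDiff ℝ (⊤ : ℕ∞) (fun h => pd v (pd w (pd z F)) (t₀ + c * h, y h)) :=
    fun v w z => contDiff_comp2 (pd_contDiff (pd_contDiff (pd_contDiff hF z) w) v) A hycd
  have Q : ∀ v w : ℝ × ℝ, ContDiff ℝ (⊤ : ℕ∞) (fun h => pd v (pd w F) (t₀ + c * h, y h)) :=
    fun v w => contDiff_comp2 (pd_contDiff (pd_contDiff hF w) v) A hycd
  have R : ∀ v : ℝ × ℝ, ContDiff ℝ (⊤ : ℕ∞) (fun h => pd v F (t₀ + c * h, y h)) :=
    fun v => contDiff_comp2 (pd_contDiff hF v) A hycd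
  unfold kd3
  exact (M ((M ((M (P (1,0) (1,0) (1,0))).add (hy1cd.mul (P (0,1) (1,0) (1,0))))).add
      ((hy2cd.mul (Q (0,1) (1,0))).add
        (hy1cd.mul ((M (P (1,0) (0,1) (1,0))).add (hy1cd.mul (P (0,1) (0,1) (1,0)))))))).add
    (((hy3cd.mul (R (0,1))).add
        (hy2cd.mul ((M (Q (1,0) (0,1))).add (hy1cd.mul (Q (0,1) (0,1)))))).add
      ((hy2cd.mul ((M (Q (1,0) (0,1))).add (hy1cd.mul (Q (0,1) (0,1))))).add
        (hy1cd.mul ((M ((M (P (1,0) (1,0) (0,1))).add (hy1cd.mul (P (0,1) (1,0) (0,1))))).add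
          ((hy2cd.mul (Q (0,1) (0,1))).add
            (hy1cd.mul ((M (P (1,0) (0,1) (0,1))).add (hy1cd.mul (P (0,1) (0,1) (0,1))))))))))

theorem cd_kd2 (hF : ContDiff ℝ (⊤ : ℕ∞) F) (hycd : ContDiff ℝ (⊤ : ℕ∞) y) (hy1cd : ContDiff ℝ (⊤ : ℕ∞) y1)
    (hy2cd : ContDiff ℝ (⊤ : ℕ∞) y2) :
    ContDiff ℝ (⊤ : ℕ∞) (kd2 F t₀ c y y1 y2) := by
  have A : ContDiff ℝ (⊤ : ℕ∞) (fun h : ℝ => t₀ + c * h) :=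
    contDiff_const.add (contDiff_const.mul contDiff_id)
  have M : ∀ {g : ℝ → ℝ}, ContDiff ℝ (⊤ : ℕ∞) g → ContDiff ℝ (⊤ : ℕ∞) (fun h => c * g h) :=
    fun hg => contDiff_const.mul hg
  have Q : ∀ v w : ℝ × ℝ, ContDiff ℝ (⊤ : ℕ∞) (fun h => pd v (pd w F) (t₀ + c * h, y h)) :=
    fun v w => contDiff_comp2 (pd_contDiff (pd_contDiff hF w) v) A hycd
  have R : ∀ v : ℝ × ℝ, ContDiff ℝ (⊤ : ℕ∞) (fun h => pd v F (t₀ + c * h, y h)) :=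
    fun v => contDiff_comp2 (pd_contDiff hF v) A hycd
  unfold kd2
  exact (M ((M (Q (1,0) (1,0))).add (hy1cd.mul (Q (0,1) (1,0))))).add
    ((hy2cd.mul (R (0,1))).add
      (hy1cd.mul ((M (Q (1,0) (0,1))).add (hy1cd.mul (Q (0,1) (0,1))))))

theorem cd_kd1 (hF : ContDiff ℝ (⊤ : ℕ∞) F) (hycd : ContDiff ℝ (⊤ : ℕ∞) y) (hy1cd : ContDiff ℝ (⊤ : ℕ∞) y1) :
    ContDiff ℝ (⊤ : ℕ∞) (kd1 F t₀ c y y1) := by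
  have A : ContDiff ℝ (⊤ : ℕ∞) (fun h : ℝ => t₀ + c * h) :=
    contDiff_const.add (contDiff_const.mul contDiff_id)
  have R : ∀ v : ℝ × ℝ, ContDiff ℝ (⊤ : ℕ∞) (fun h => pd v F (t₀ + c * h, y h)) :=
    fun v => contDiff_comp2 (pd_contDiff hF v) A hycd
  exact (contDiff_const.mul (R (1,0))).add (hy1cd.mul (R (0,1)))

theorem cd_kd0 (hF : ContDiff ℝ (⊤ : ℕ∞) F) (hycd : ContDiff ℝ (⊤ : ℕ∞) y) :
    ContDiff ℝ (⊤ : ℕ∞) (fun h => F (t₀ + c * h, y h)) :=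
  contDiff_comp2 hF (contDiff_const.add (contDiff_const.mul contDiff_id)) hycd

end ladder

theorem HasDerivAt.congr_d {f : ℝ → ℝ} {a b x : ℝ} (h : HasDerivAt f a x) (e : a = b) :
    HasDerivAt f b x := e ▸ h

noncomputable def wf (e c : ℝ) : ℝ → ℝ := fun h => Real.exp (-e * (c * h) ^ 2)
noncomputable def wf1 (e c : ℝ) : ℝ → ℝ := fun h => wf e c h * (-e * (2 * (c * h) * c))
noncomputable def wf2 (e c : ℝ) : ℝ → ℝ := fun h =>
  wf1 e c h * (-e * (2 * (c * h) * c)) + wf e c h * (-e * (2 * c * c))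
noncomputable def wf3 (e c : ℝ) : ℝ → ℝ := fun h =>
  (wf2 e c h * (-e * (2 * (c * h) * c)) + wf1 e c h * (-e * (2 * c * c)))
    + wf1 e c h * (-e * (2 * c * c))

theorem hd_inner (e c x : ℝ) :
    HasDerivAt (fun h => -e * (c * h) ^ 2) (-e * (2 * (c * x) * c)) x := by
  have h1 : HasDerivAt (fun h : ℝ => c * h) c x := by simpa using (hasDerivAt_id x).const_mul c
  exact ((h1.pow 2).const_mul (-e)).congr_d (by push_cast; ring)

theorem hd_inner2 (e c x : ℝ) :
    HasDerivAt (fun h => -e * (2 * (c * h) * c)) (-e * (2 * c * c)) x := by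
  have h1 : HasDerivAt (fun h : ℝ => c * h) c x := by simpa using (hasDerivAt_id x).const_mul c
  exact (((h1.const_mul 2).mul_const c).const_mul (-e)).congr_d (by ring)

theorem hd_wf (e c x : ℝ) : HasDerivAt (wf e c) (wf1 e c x) x := (hd_inner e c x).exp

theorem hd_wf1 (e c x : ℝ) : HasDerivAt (wf1 e c) (wf2 e c x) x :=
  (hd_wf e c x).mul (hd_inner2 e c x)

theorem hd_wf2 (e c x : ℝ) : HasDerivAt (wf2 e c) (wf3 e c x) x :=
  ((hd_wf1 e c x).mul (hd_inner2 e c x)).add ((hd_wf e c x).mul_const _)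

@[simp] theorem wf_zero (e c : ℝ) : wf e c 0 = 1 := by simp [wf]
@[simp] theorem wf1_zero (e c : ℝ) : wf1 e c 0 = 0 := by simp [wf1]
theorem wf2_zero (e c : ℝ) : wf2 e c 0 = -e * (2 * c * c) := by simp [wf2]
@[simp] theorem wf3_zero (e c : ℝ) : wf3 e c 0 = 0 := by simp [wf3, wf2]

theorem cd_wf (e c : ℝ) : ContDiff ℝ (⊤ : ℕ∞) (wf e c) :=
  Real.contDiff_exp.comp (contDiff_const.mul ((contDiff_const.mul contDiff_id).pow 2))
theorem cd_inner2 (e c : ℝ) : ContDiff ℝ (⊤ : ℕ∞) (fun h => -e * (2 * (c * h) * c)) :=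
  contDiff_const.mul ((contDiff_const.mul (contDiff_const.mul contDiff_id)).mul contDiff_const)
theorem cd_wf1 (e c : ℝ) : ContDiff ℝ (⊤ : ℕ∞) (wf1 e c) := (cd_wf e c).mul (cd_inner2 e c)
theorem cd_wf2 (e c : ℝ) : ContDiff ℝ (⊤ : ℕ∞) (wf2 e c) :=
  ((cd_wf1 e c).mul (cd_inner2 e c)).add ((cd_wf e c).mul contDiff_const)
theorem cd_wf3 (e c : ℝ) : ContDiff ℝ (⊤ : ℕ∞) (wf3 e c) :=
  (((cd_wf2 e c).mul (cd_inner2 e c)).add ((cd_wf1 e c).mul contDiff_const)).add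
    ((cd_wf1 e c).mul contDiff_const)

theorem descend {g g' : ℝ → ℝ} {n : ℕ} (h0 : g 0 = 0)
    (hg : ∀ᶠ x in 𝓝 (0:ℝ), HasDerivAt g (g' x) x)
    (hO : g' =O[𝓝 (0:ℝ)] fun x => x ^ n) :
    g =O[𝓝 (0:ℝ)] fun x => x ^ (n + 1) := by
  obtain ⟨C, hC⟩ := hO.bound
  obtain ⟨ε, hε, hball⟩ := Metric.eventually_nhds_iff.1 (hg.and hC)
  rw [isBigO_iff]
  refine ⟨max C 0, ?_⟩
  have hev : ∀ᶠ x in 𝓝 (0:ℝ), |x| < ε := by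
    filter_upwards [Metric.ball_mem_nhds (0:ℝ) hε] with x hx
    simpa [Real.dist_eq] using hx
  filter_upwards [hev] with x hx
  have hsub : ∀ t ∈ Set.Icc (-|x|) |x|, dist t 0 < ε := by
    intro t ht
    rw [Real.dist_eq, sub_zero]
    exact lt_of_le_of_lt (abs_le.2 ⟨ht.1, ht.2⟩) hx
  have hder : ∀ t ∈ Set.Icc (-|x|) |x|,
      HasDerivWithinAt g (g' t) (Set.Icc (-|x|) |x|) t :=
    fun t ht => ((hball (hsub t ht)).1).hasDerivWithinAt
  have hbound : ∀ t ∈ Set.Icc (-|x|) |x|, ‖g' t‖ ≤ max C 0 * |x| ^ n := by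
    intro t ht
    refine le_trans ((hball (hsub t ht)).2) ?_
    have h1 : ‖t ^ n‖ ≤ |x| ^ n := by
      rw [Real.norm_eq_abs, abs_pow]
      exact pow_le_pow_left₀ (abs_nonneg t) (abs_le.2 ⟨ht.1, ht.2⟩) n
    calc C * ‖t ^ n‖ ≤ max C 0 * ‖t ^ n‖ :=
          mul_le_mul_of_nonneg_right (le_max_left _ _) (norm_nonneg _)
      _ ≤ max C 0 * |x| ^ n := mul_le_mul_of_nonneg_left h1 (le_max_right _ _)
  have h00 : (0:ℝ) ∈ Set.Icc (-|x|) |x| := ⟨neg_nonpos.2 (abs_nonneg x), abs_nonneg x⟩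
  have hxx : x ∈ Set.Icc (-|x|) |x| := ⟨neg_abs_le x, le_abs_self x⟩
  have key := (convex_Icc _ _).norm_image_sub_le_of_norm_hasDerivWithin_le hder hbound h00 hxx
  rw [h0, sub_zero, sub_zero] at key
  calc ‖g x‖ ≤ max C 0 * |x| ^ n * ‖x‖ := key
    _ = max C 0 * ‖x ^ (n + 1)‖ := by
        rw [Real.norm_eq_abs, Real.norm_eq_abs, abs_pow, pow_succ]; ring


/-- The four-stage RBF Runge–Kutta method satisfying the fourth-order conditions
together with the three shape-parameter constraints retains fourth-order
accuracy: the local truncation error is `O(h⁴)` as `h → 0`. -/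
theorem stmt_15 (f : ℝ → ℝ → ℝ)
    (hf : ContDiff ℝ (⊤ : ℕ∞) (fun p : ℝ × ℝ => f p.1 p.2))
    (t₀ : ℝ) (u : ℝ → ℝ)
    (hu : ∀ᶠ t in 𝓝 t₀, HasDerivAt u (f t (u t)) t)
    (b₁ b₂ b₃ b₄ c₂ c₃ c₄ a₂₁ a₃₁ a₃₂ a₄₁ a₄₂ a₄₃ : ℝ)
    (hb : b₁ + b₂ + b₃ + b₄ = 1)
    (ha21 : a₂₁ = c₂) (ha3 : a₃₁ + a₃₂ = c₃) (ha4 : a₄₁ + a₄₂ + a₄₃ = c₄)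
    (hoc1 : b₂ * c₂ + b₃ * c₃ + b₄ * c₄ = 1 / 2)
    (hoc2 : b₂ * c₂ ^ 2 + b₃ * c₃ ^ 2 + b₄ * c₄ ^ 2 = 1 / 3)
    (hoc3 : b₂ * c₂ ^ 3 + b₃ * c₃ ^ 3 + b₄ * c₄ ^ 3 = 1 / 4)
    (hoc4 : a₃₂ * b₃ * c₂ + a₄₂ * b₄ * c₂ + a₄₃ * b₄ * c₃ = 1 / 6)
    (hoc5 : a₃₂ * b₃ * c₂ * c₃ + a₄₂ * b₄ * c₂ * c₄ + a₄₃ * b₄ * c₃ * c₄ = 1 / 8)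
    (hoc6 : a₃₂ * b₃ * c₂ ^ 2 + a₄₂ * b₄ * c₂ ^ 2 + a₄₃ * b₄ * c₃ ^ 2 = 1 / 12)
    (hoc7 : a₃₂ * a₄₃ * b₄ * c₂ = 1 / 24)
    (e₂ e₃ e₄ : ℝ)
    (heps1 : b₂ * c₂ ^ 2 * e₂ + b₃ * c₃ ^ 2 * e₃ + b₄ * c₄ ^ 2 * e₄ = 0)
    (heps2 : b₂ * c₂ ^ 3 * e₂ + b₃ * c₃ ^ 3 * e₃ + b₄ * c₄ ^ 3 * e₄ = 0)
    (heps3 : a₃₂ * b₃ * c₂ ^ 2 * e₂ + a₄₂ * b₄ * c₂ ^ 2 * e₂ + a₄₃ * b₄ * c₃ ^ 2 * e₃ = 0)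
    (k₁ k₂ k₃ k₄ : ℝ → ℝ)
    (hk₁ : ∀ h : ℝ, k₁ h = f t₀ (u t₀))
    (hk₂ : ∀ h : ℝ, k₂ h = f (t₀ + c₂ * h)
        (u t₀ * Real.exp (-e₂ * (c₂ * h) ^ 2) + h * (a₂₁ * k₁ h)))
    (hk₃ : ∀ h : ℝ, k₃ h = f (t₀ + c₃ * h)
        (u t₀ * Real.exp (-e₃ * (c₃ * h) ^ 2) + h * (a₃₁ * k₁ h + a₃₂ * k₂ h)))
    (hk₄ : ∀ h : ℝ, k₄ h = f (t₀ + c₄ * h)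
        (u t₀ * Real.exp (-e₄ * (c₄ * h) ^ 2)
          + h * (a₄₁ * k₁ h + a₄₂ * k₂ h + a₄₃ * k₃ h))) :
    (fun h : ℝ =>
        (u (t₀ + h) - u t₀) / h
          - (b₁ * k₁ h + b₂ * k₂ h + b₃ * k₃ h + b₄ * k₄ h))
      =O[𝓝[≠] (0 : ℝ)] fun h => h ^ 4 := by
  have h31 : a₃₁ = c₃ - a₃₂ := by linarith
  have h41 : a₄₁ = c₄ - a₄₂ - a₄₃ := by linarith
  have hb1 : b₁ = 1 - b₂ - b₃ - b₄ := by linarith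
  simp only [ha21] at hk₂
  simp only [h31] at hk₃
  simp only [h41] at hk₄
  simp only [hb1]
  set F : ℝ × ℝ → ℝ := fun p : ℝ × ℝ => f p.1 p.2 with hFdef
  -- ==== stage 2 ====
  set y2 : ℝ → ℝ := fun h => u t₀ * wf e₂ c₂ h + h * (c₂ * F (t₀, u t₀)) with hy2def
  set y21 : ℝ → ℝ := fun h => u t₀ * wf1 e₂ c₂ h + c₂ * F (t₀, u t₀) with hy21def
  set y22 : ℝ → ℝ := fun h => u t₀ * wf2 e₂ c₂ h with hy22def
  set y23 : ℝ → ℝ := fun h => u t₀ * wf3 e₂ c₂ h with hy23def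
  have hdy2 : ∀ x, HasDerivAt y2 (y21 x) x := fun x =>
    ((hd_wf e₂ c₂ x).const_mul (u t₀)).add (hasDerivAt_mul_const (c₂ * F (t₀, u t₀)))
  have hdy21 : ∀ x, HasDerivAt y21 (y22 x) x := fun x =>
    ((hd_wf1 e₂ c₂ x).const_mul (u t₀)).add_const _
  have hdy22 : ∀ x, HasDerivAt y22 (y23 x) x := fun x =>
    (hd_wf2 e₂ c₂ x).const_mul (u t₀)
  have cdy2 : ContDiff ℝ (⊤ : ℕ∞) y2 :=
    (contDiff_const.mul (cd_wf e₂ c₂)).add (contDiff_id.mul contDiff_const)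
  have cdy21 : ContDiff ℝ (⊤ : ℕ∞) y21 :=
    (contDiff_const.mul (cd_wf1 e₂ c₂)).add contDiff_const
  have cdy22 : ContDiff ℝ (⊤ : ℕ∞) y22 := contDiff_const.mul (cd_wf2 e₂ c₂)
  have cdy23 : ContDiff ℝ (⊤ : ℕ∞) y23 := contDiff_const.mul (cd_wf3 e₂ c₂)
  set k2e : ℝ → ℝ := fun h => F (t₀ + c₂ * h, y2 h) with hk2edef
  set k21 : ℝ → ℝ := kd1 F t₀ c₂ y2 y21 with hk21def
  set k22 : ℝ → ℝ := kd2 F t₀ c₂ y2 y21 y22 with hk22def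
  set k23 : ℝ → ℝ := kd3 F t₀ c₂ y2 y21 y22 y23 with hk23def
  have hdk2e : ∀ x, HasDerivAt k2e (k21 x) x := fun x => hd_kd0 hf (hdy2 x)
  have hdk21 : ∀ x, HasDerivAt k21 (k22 x) x := fun x => hd_kd1 hf (hdy2 x) (hdy21 x)
  have hdk22 : ∀ x, HasDerivAt k22 (k23 x) x := fun x => hd_kd2 hf (hdy2 x) (hdy21 x) (hdy22 x)
  have cdk2e : ContDiff ℝ (⊤ : ℕ∞) k2e := cd_kd0 hf cdy2
  have cdk21 : ContDiff ℝ (⊤ : ℕ∞) k21 := cd_kd1 hf cdy2 cdy21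
  have cdk22 : ContDiff ℝ (⊤ : ℕ∞) k22 := cd_kd2 hf cdy2 cdy21 cdy22
  have cdk23 : ContDiff ℝ (⊤ : ℕ∞) k23 := cd_kd3 hf cdy2 cdy21 cdy22 cdy23
  -- ==== stage 3 ====
  set g3 : ℝ → ℝ := fun h => (c₃ - a₃₂) * F (t₀, u t₀) + a₃₂ * k2e h with hg3def
  have hdg3 : ∀ x, HasDerivAt g3 (a₃₂ * k21 x) x := fun x =>
    ((hdk2e x).const_mul a₃₂).const_add _
  have cdg3 : ContDiff ℝ (⊤ : ℕ∞) g3 := contDiff_const.add (contDiff_const.mul cdk2e)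
  set y3 : ℝ → ℝ := fun h => u t₀ * wf e₃ c₃ h + h * g3 h with hy3def
  set y31 : ℝ → ℝ := fun h => u t₀ * wf1 e₃ c₃ h + (g3 h + h * (a₃₂ * k21 h)) with hy31def
  set y32 : ℝ → ℝ := fun h => u t₀ * wf2 e₃ c₃ h
    + (a₃₂ * k21 h + (a₃₂ * k21 h + h * (a₃₂ * k22 h))) with hy32def
  set y33 : ℝ → ℝ := fun h => u t₀ * wf3 e₃ c₃ h
    + (a₃₂ * k22 h + (a₃₂ * k22 h + (a₃₂ * k22 h + h * (a₃₂ * k23 h)))) with hy33def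
  have hdy3 : ∀ x, HasDerivAt y3 (y31 x) x := fun x =>
    ((hd_wf e₃ c₃ x).const_mul (u t₀)).add (hasDerivAt_id_mul (hdg3 x))
  have hdy31 : ∀ x, HasDerivAt y31 (y32 x) x := fun x =>
    ((hd_wf1 e₃ c₃ x).const_mul (u t₀)).add
      ((hdg3 x).add (hasDerivAt_id_mul ((hdk21 x).const_mul a₃₂)))
  have hdy32 : ∀ x, HasDerivAt y32 (y33 x) x := fun x =>
    ((hd_wf2 e₃ c₃ x).const_mul (u t₀)).add
      (((hdk21 x).const_mul a₃₂).add
        (((hdk21 x).const_mul a₃₂).add (hasDerivAt_id_mul ((hdk22 x).const_mul a₃₂))))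
  have cdy3 : ContDiff ℝ (⊤ : ℕ∞) y3 :=
    (contDiff_const.mul (cd_wf e₃ c₃)).add (contDiff_id.mul cdg3)
  have cdy31 : ContDiff ℝ (⊤ : ℕ∞) y31 :=
    (contDiff_const.mul (cd_wf1 e₃ c₃)).add
      (cdg3.add (contDiff_id.mul (contDiff_const.mul cdk21)))
  have cdy32 : ContDiff ℝ (⊤ : ℕ∞) y32 :=
    (contDiff_const.mul (cd_wf2 e₃ c₃)).add
      ((contDiff_const.mul cdk21).add
        ((contDiff_const.mul cdk21).add (contDiff_id.mul (contDiff_const.mul cdk22))))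
  have cdy33 : ContDiff ℝ (⊤ : ℕ∞) y33 :=
    (contDiff_const.mul (cd_wf3 e₃ c₃)).add
      ((contDiff_const.mul cdk22).add
        ((contDiff_const.mul cdk22).add
          ((contDiff_const.mul cdk22).add (contDiff_id.mul (contDiff_const.mul cdk23)))))
  set k3e : ℝ → ℝ := fun h => F (t₀ + c₃ * h, y3 h) with hk3edef
  set k31 : ℝ → ℝ := kd1 F t₀ c₃ y3 y31 with hk31def
  set k32 : ℝ → ℝ := kd2 F t₀ c₃ y3 y31 y32 with hk32def
  set k33 : ℝ → ℝ := kd3 F t₀ c₃ y3 y31 y32 y33 with hk33def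
  have hdk3e : ∀ x, HasDerivAt k3e (k31 x) x := fun x => hd_kd0 hf (hdy3 x)
  have hdk31 : ∀ x, HasDerivAt k31 (k32 x) x := fun x => hd_kd1 hf (hdy3 x) (hdy31 x)
  have hdk32 : ∀ x, HasDerivAt k32 (k33 x) x := fun x => hd_kd2 hf (hdy3 x) (hdy31 x) (hdy32 x)
  have cdk3e : ContDiff ℝ (⊤ : ℕ∞) k3e := cd_kd0 hf cdy3
  have cdk31 : ContDiff ℝ (⊤ : ℕ∞) k31 := cd_kd1 hf cdy3 cdy31
  have cdk32 : ContDiff ℝ (⊤ : ℕ∞) k32 := cd_kd2 hf cdy3 cdy31 cdy32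
  have cdk33 : ContDiff ℝ (⊤ : ℕ∞) k33 := cd_kd3 hf cdy3 cdy31 cdy32 cdy33
  -- ==== stage 4 ====
  set g4 : ℝ → ℝ := fun h =>
    (c₄ - a₄₂ - a₄₃) * F (t₀, u t₀) + a₄₂ * k2e h + a₄₃ * k3e h with hg4def
  have hdg4 : ∀ x, HasDerivAt g4 (a₄₂ * k21 x + a₄₃ * k31 x) x := fun x =>
    (((hdk2e x).const_mul a₄₂).const_add _).add ((hdk3e x).const_mul a₄₃)
  have cdg4 : ContDiff ℝ (⊤ : ℕ∞) g4 :=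
    (contDiff_const.add (contDiff_const.mul cdk2e)).add (contDiff_const.mul cdk3e)
  set y4 : ℝ → ℝ := fun h => u t₀ * wf e₄ c₄ h + h * g4 h with hy4def
  set y41 : ℝ → ℝ := fun h => u t₀ * wf1 e₄ c₄ h
    + (g4 h + h * (a₄₂ * k21 h + a₄₃ * k31 h)) with hy41def
  set y42 : ℝ → ℝ := fun h => u t₀ * wf2 e₄ c₄ h
    + ((a₄₂ * k21 h + a₄₃ * k31 h) + ((a₄₂ * k21 h + a₄₃ * k31 h)
        + h * (a₄₂ * k22 h + a₄₃ * k32 h))) with hy42def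
  set y43 : ℝ → ℝ := fun h => u t₀ * wf3 e₄ c₄ h
    + ((a₄₂ * k22 h + a₄₃ * k32 h) + ((a₄₂ * k22 h + a₄₃ * k32 h)
        + ((a₄₂ * k22 h + a₄₃ * k32 h) + h * (a₄₂ * k23 h + a₄₃ * k33 h)))) with hy43def
  have hdy4 : ∀ x, HasDerivAt y4 (y41 x) x := fun x =>
    ((hd_wf e₄ c₄ x).const_mul (u t₀)).add (hasDerivAt_id_mul (hdg4 x))
  have hdy41 : ∀ x, HasDerivAt y41 (y42 x) x := fun x =>
    ((hd_wf1 e₄ c₄ x).const_mul (u t₀)).add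
      ((hdg4 x).add (hasDerivAt_id_mul
        (((hdk21 x).const_mul a₄₂).add ((hdk31 x).const_mul a₄₃))))
  have hdy42 : ∀ x, HasDerivAt y42 (y43 x) x := fun x =>
    ((hd_wf2 e₄ c₄ x).const_mul (u t₀)).add
      ((((hdk21 x).const_mul a₄₂).add ((hdk31 x).const_mul a₄₃)).add
        ((((hdk21 x).const_mul a₄₂).add ((hdk31 x).const_mul a₄₃)).add
          (hasDerivAt_id_mul (((hdk22 x).const_mul a₄₂).add ((hdk32 x).const_mul a₄₃)))))
  have cdS1 : ContDiff ℝ (⊤ : ℕ∞) (fun h => a₄₂ * k21 h + a₄₃ * k31 h) :=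
    (contDiff_const.mul cdk21).add (contDiff_const.mul cdk31)
  have cdS2 : ContDiff ℝ (⊤ : ℕ∞) (fun h => a₄₂ * k22 h + a₄₃ * k32 h) :=
    (contDiff_const.mul cdk22).add (contDiff_const.mul cdk32)
  have cdy4 : ContDiff ℝ (⊤ : ℕ∞) y4 :=
    (contDiff_const.mul (cd_wf e₄ c₄)).add (contDiff_id.mul cdg4)
  have cdy41 : ContDiff ℝ (⊤ : ℕ∞) y41 :=
    (contDiff_const.mul (cd_wf1 e₄ c₄)).add (cdg4.add (contDiff_id.mul cdS1))
  have cdy42 : ContDiff ℝ (⊤ : ℕ∞) y42 :=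
    (contDiff_const.mul (cd_wf2 e₄ c₄)).add
      (cdS1.add (cdS1.add (contDiff_id.mul cdS2)))
  have cdy43 : ContDiff ℝ (⊤ : ℕ∞) y43 :=
    (contDiff_const.mul (cd_wf3 e₄ c₄)).add
      (cdS2.add (cdS2.add (cdS2.add (contDiff_id.mul
        ((contDiff_const.mul cdk23).add (contDiff_const.mul cdk33))))))
  set k4e : ℝ → ℝ := fun h => F (t₀ + c₄ * h, y4 h) with hk4edef
  set k41 : ℝ → ℝ := kd1 F t₀ c₄ y4 y41 with hk41def
  set k42 : ℝ → ℝ := kd2 F t₀ c₄ y4 y41 y42 with hk42def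
  set k43 : ℝ → ℝ := kd3 F t₀ c₄ y4 y41 y42 y43 with hk43def
  have hdk4e : ∀ x, HasDerivAt k4e (k41 x) x := fun x => hd_kd0 hf (hdy4 x)
  have hdk41 : ∀ x, HasDerivAt k41 (k42 x) x := fun x => hd_kd1 hf (hdy4 x) (hdy41 x)
  have hdk42 : ∀ x, HasDerivAt k42 (k43 x) x := fun x => hd_kd2 hf (hdy4 x) (hdy41 x) (hdy42 x)
  have cdk43 : ContDiff ℝ (⊤ : ℕ∞) k43 := cd_kd3 hf cdy4 cdy41 cdy42 cdy43
  -- ==== K ladder ====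
  set K : ℝ → ℝ := fun h => (1 - b₂ - b₃ - b₄) * F (t₀, u t₀)
    + (b₂ * k2e h + b₃ * k3e h + b₄ * k4e h) with hKdef
  set K1 : ℝ → ℝ := fun h => b₂ * k21 h + b₃ * k31 h + b₄ * k41 h with hK1def
  set K2 : ℝ → ℝ := fun h => b₂ * k22 h + b₃ * k32 h + b₄ * k42 h with hK2def
  set K3 : ℝ → ℝ := fun h => b₂ * k23 h + b₃ * k33 h + b₄ * k43 h with hK3def
  have hdK : ∀ x, HasDerivAt K (K1 x) x := fun x =>
    ((((hdk2e x).const_mul b₂).add ((hdk3e x).const_mul b₃)).add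
      ((hdk4e x).const_mul b₄)).const_add _
  have hdK1 : ∀ x, HasDerivAt K1 (K2 x) x := fun x =>
    (((hdk21 x).const_mul b₂).add ((hdk31 x).const_mul b₃)).add ((hdk41 x).const_mul b₄)
  have hdK2 : ∀ x, HasDerivAt K2 (K3 x) x := fun x =>
    (((hdk22 x).const_mul b₂).add ((hdk32 x).const_mul b₃)).add ((hdk42 x).const_mul b₄)
  have cdK3 : ContDiff ℝ (⊤ : ℕ∞) K3 :=
    ((contDiff_const.mul cdk23).add (contDiff_const.mul cdk33)).add
      (contDiff_const.mul cdk43)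
  have hdK3 : ∀ x, HasDerivAt K3 (deriv K3 x) x := fun x =>
    (cdK3.differentiable (by simp) x).hasDerivAt
  have hdK3' : DifferentiableAt ℝ (deriv K3) 0 := by
    have h1 : ContDiff ℝ ∞ (deriv K3) := (contDiff_infty_iff_deriv.mp (cdK3.of_le (by simp))).2
    exact (h1.differentiable (by simp)).differentiableAt
  -- ==== solution side ====
  set ush : ℝ → ℝ := fun h => u (t₀ + h) with hushdef
  set A1 : ℝ → ℝ := fun h => F (t₀ + 1 * h, ush h) with hA1def
  set A2 : ℝ → ℝ := kd1 F t₀ 1 ush A1 with hA2def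
  set A3 : ℝ → ℝ := kd2 F t₀ 1 ush A1 A2 with hA3def
  set A4 : ℝ → ℝ := kd3 F t₀ 1 ush A1 A2 A3 with hA4def
  have hu' : ∀ᶠ x in 𝓝 (0 : ℝ), HasDerivAt ush (A1 x) x := by
    have ht : Tendsto (fun x : ℝ => t₀ + x) (𝓝 0) (𝓝 t₀) := by
      simpa [Pi.add_def] using (continuous_const.add continuous_id).tendsto (0 : ℝ)
    filter_upwards [ht.eventually hu] with x hx
    have h1 := HasDerivAt.comp x hx ((hasDerivAt_id x).const_add t₀)
    have h2 : A1 x = f (t₀ + x) (u (t₀ + x)) * 1 := by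
      simp [hA1def, hushdef, hFdef]
    rw [h2]; exact h1
  have hdA1 : ∀ᶠ x in 𝓝 (0 : ℝ), HasDerivAt A1 (A2 x) x :=
    hu'.mono fun x hx => hd_kd0 hf hx
  have hdA2 : ∀ᶠ x in 𝓝 (0 : ℝ), HasDerivAt A2 (A3 x) x :=
    (hu'.and hdA1).mono fun x hx => hd_kd1 hf hx.1 hx.2
  have hdA3 : ∀ᶠ x in 𝓝 (0 : ℝ), HasDerivAt A3 (A4 x) x :=
    (hu'.and (hdA1.and hdA2)).mono fun x hx => hd_kd2 hf hx.1 hx.2.1 hx.2.2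
  -- ==== Phi chain ====
  set P0 : ℝ → ℝ := fun h => u (t₀ + h) - u t₀ - h * K h with hP0def
  set P1 : ℝ → ℝ := fun h => A1 h - (K h + h * K1 h) with hP1def
  set P2 : ℝ → ℝ := fun h => A2 h - (K1 h + (K1 h + h * K2 h)) with hP2def
  set P3 : ℝ → ℝ := fun h => A3 h - (K2 h + (K2 h + (K2 h + h * K3 h))) with hP3def
  set P4 : ℝ → ℝ := fun h =>
    A4 h - (K3 h + (K3 h + (K3 h + (K3 h + h * deriv K3 h)))) with hP4def
  have hdP0 : ∀ᶠ x in 𝓝 (0 : ℝ), HasDerivAt P0 (P1 x) x :=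
    hu'.mono fun x hx => (hx.sub_const (u t₀)).sub (hasDerivAt_id_mul (hdK x))
  have hdP1 : ∀ᶠ x in 𝓝 (0 : ℝ), HasDerivAt P1 (P2 x) x :=
    hdA1.mono fun x hx => hx.sub ((hdK x).add (hasDerivAt_id_mul (hdK1 x)))
  have hdP2 : ∀ᶠ x in 𝓝 (0 : ℝ), HasDerivAt P2 (P3 x) x :=
    hdA2.mono fun x hx => hx.sub
      ((hdK1 x).add ((hdK1 x).add (hasDerivAt_id_mul (hdK2 x))))
  have hdP3 : ∀ᶠ x in 𝓝 (0 : ℝ), HasDerivAt P3 (P4 x) x :=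
    hdA3.mono fun x hx => hx.sub
      ((hdK2 x).add ((hdK2 x).add ((hdK2 x).add (hasDerivAt_id_mul (hdK3 x)))))
  -- differentiability of P4 at 0
  have ushd0 : DifferentiableAt ℝ ush 0 := (hu'.self_of_nhds).differentiableAt
  have A1d0 : DifferentiableAt ℝ A1 0 := (hdA1.self_of_nhds).differentiableAt
  have A2d0 : DifferentiableAt ℝ A2 0 := (hdA2.self_of_nhds).differentiableAt
  have A3d0 : DifferentiableAt ℝ A3 0 := (hdA3.self_of_nhds).differentiableAt
  have A4d0 : DifferentiableAt ℝ A4 0 := diffAt_kd3 hf ushd0 A1d0 A2d0 A3d0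
  have K3d0 : DifferentiableAt ℝ K3 0 := (hdK3 0).differentiableAt
  have P4d0 : DifferentiableAt ℝ P4 0 :=
    A4d0.sub (K3d0.add (K3d0.add (K3d0.add (K3d0.add (differentiableAt_fun_id.mul hdK3')))))
  -- ==== values at 0 ====
  have e0v : P0 0 = 0 := by simp [hP0def]
  have e1v : P1 0 = 0 := by
    simp only [hP0def, hP1def, hP2def, hP3def, hP4def, hushdef, hA1def, hA2def, hA3def, hA4def, hKdef, hK1def, hK2def, hK3def, hg3def, hg4def, hy2def, hy21def, hy22def, hy23def, hy3def, hy31def, hy32def, hy33def, hy4def, hy41def, hy42def, hy43def, hk2edef, hk21def, hk22def, hk23def, hk3edef, hk31def, hk32def, hk33def, hk4edef, hk41def, hk42def, hk43def, kd1, kd2, kd3, wf_zero, wf1_zero, wf2_zero, wf3_zero, mul_zero, zero_mul, add_zero, zero_add, one_mul, mul_one]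
    ring
  have e2v : P2 0 = 0 := by
    simp only [hP0def, hP1def, hP2def, hP3def, hP4def, hushdef, hA1def, hA2def, hA3def, hA4def, hKdef, hK1def, hK2def, hK3def, hg3def, hg4def, hy2def, hy21def, hy22def, hy23def, hy3def, hy31def, hy32def, hy33def, hy4def, hy41def, hy42def, hy43def, hk2edef, hk21def, hk22def, hk23def, hk3edef, hk31def, hk32def, hk33def, hk4edef, hk41def, hk42def, hk43def, kd1, kd2, kd3, wf_zero, wf1_zero, wf2_zero, wf3_zero, mul_zero, zero_mul, add_zero, zero_add, one_mul, mul_one]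
    linear_combination ((-2) * (F (t₀, u t₀)) * (pd (0,1) F (t₀, u t₀)) + (-2) * (pd (1,0) F (t₀, u t₀))) * hoc1
  have e3v : P3 0 = 0 := by
    simp only [hP0def, hP1def, hP2def, hP3def, hP4def, hushdef, hA1def, hA2def, hA3def, hA4def, hKdef, hK1def, hK2def, hK3def, hg3def, hg4def, hy2def, hy21def, hy22def, hy23def, hy3def, hy31def, hy32def, hy33def, hy4def, hy41def, hy42def, hy43def, hk2edef, hk21def, hk22def, hk23def, hk3edef, hk31def, hk32def, hk33def, hk4edef, hk41def, hk42def, hk43def, kd1, kd2, kd3, wf_zero, wf1_zero, wf2_zero, wf3_zero, mul_zero, zero_mul, add_zero, zero_add, one_mul, mul_one]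
    linear_combination ((-3) * (F (t₀, u t₀)) * (F (t₀, u t₀)) * (pd (0,1) (pd (0,1) F) (t₀, u t₀)) + (-3) * (F (t₀, u t₀)) * (pd (1,0) (pd (0,1) F) (t₀, u t₀)) + (-3) * (F (t₀, u t₀)) * (pd (0,1) (pd (1,0) F) (t₀, u t₀)) + (-3) * (pd (1,0) (pd (1,0) F) (t₀, u t₀))) * hoc2 + ((-6) * (F (t₀, u t₀)) * (pd (0,1) F (t₀, u t₀)) * (pd (0,1) F (t₀, u t₀)) + (-6) * (pd (1,0) F (t₀, u t₀)) * (pd (0,1) F (t₀, u t₀))) * hoc4 + ((6) * (pd (0,1) F (t₀, u t₀)) * (u t₀)) * heps1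
  have e4v : P4 0 = 0 := by
    simp only [hP0def, hP1def, hP2def, hP3def, hP4def, hushdef, hA1def, hA2def, hA3def, hA4def, hKdef, hK1def, hK2def, hK3def, hg3def, hg4def, hy2def, hy21def, hy22def, hy23def, hy3def, hy31def, hy32def, hy33def, hy4def, hy41def, hy42def, hy43def, hk2edef, hk21def, hk22def, hk23def, hk3edef, hk31def, hk32def, hk33def, hk4edef, hk41def, hk42def, hk43def, kd1, kd2, kd3, wf_zero, wf1_zero, wf2_zero, wf3_zero, mul_zero, zero_mul, add_zero, zero_add, one_mul, mul_one]
    linear_combination ((-4) * (F (t₀, u t₀)) * (F (t₀, u t₀)) * (F (t₀, u t₀)) * (pd (0,1) (pd (0,1) (pd (0,1) F)) (t₀, u t₀)) + (-4) * (F (t₀, u t₀)) * (F (t₀, u t₀)) * (pd (1,0) (pd (0,1) (pd (0,1) F)) (t₀, u t₀)) + (-4) * (F (t₀, u t₀)) * (F (t₀, u t₀)) * (pd (0,1) (pd (1,0) (pd (0,1) F)) (t₀, u t₀)) + (-4) * (F (t₀, u t₀)) * (F (t₀, u t₀)) * (pd (0,1) (pd (0,1) (pd (1,0) F)) (t₀,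 u t₀)) + (-4) * (F (t₀, u t₀)) * (pd (1,0) (pd (1,0) (pd (0,1) F)) (t₀, u t₀)) + (-4) * (F (t₀, u t₀)) * (pd (1,0) (pd (0,1) (pd (1,0) F)) (t₀, u t₀)) + (-4) * (F (t₀, u t₀)) * (pd (0,1) (pd (1,0) (pd (1,0) F)) (t₀, u t₀)) + (-4) * (pd (1,0) (pd (1,0) (pd (1,0) F)) (t₀, u t₀))) * hoc3 + ((-24) * (F (t₀, u t₀)) * (F (t₀, u t₀)) * (pd (0,1) F (t₀, u t₀)) * (pd (0,1) (pd (0,1) F) (t₀, u t₀)) + (-24) * (F (t₀, u t₀)) * (pd (1,0) F (t₀, u t₀)) * (pd (0,1) (pd (0,1) F) (t₀, u t₀)) + (-16) * (F (t₀, u t₀)) * (pd (1,0) (pd (0,1) F) (t₀, u t₀)) * (pd (0,1) F (t₀, u t₀)) + (-8) * (F (t₀, u t₀)) * (pd (0,1) F (t₀, u t₀)) * (pd (0,1) (pd (1,0) F) (t₀, u t₀)) + (-16) * (pd (1,0) F (t₀, u t₀)) * (pd (1,0) (pd (0,1) F) (t₀, u t₀)) + (-8) * (pd (1,0) F (t₀,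 u t₀)) * (pd (0,1) (pd (1,0) F) (t₀, u t₀))) * hoc5 + ((-12) * (F (t₀, u t₀)) * (F (t₀, u t₀)) * (pd (0,1) F (t₀, u t₀)) * (pd (0,1) (pd (0,1) F) (t₀, u t₀)) + (-12) * (F (t₀, u t₀)) * (pd (1,0) (pd (0,1) F) (t₀, u t₀)) * (pd (0,1) F (t₀, u t₀)) + (-12) * (F (t₀, u t₀)) * (pd (0,1) F (t₀, u t₀)) * (pd (0,1) (pd (1,0) F) (t₀, u t₀)) + (-12) * (pd (1,0) (pd (1,0) F) (t₀, u t₀)) * (pd (0,1) F (t₀, u t₀))) * hoc6 + ((-24) * (F (t₀, u t₀)) * (pd (0,1) F (t₀, u t₀)) * (pd (0,1) F (t₀, u t₀)) * (pd (0,1) F (t₀, u t₀)) + (-24) * (pd (1,0) F (t₀, u t₀)) * (pd (0,1) F (t₀, u t₀)) * (pd (0,1) F (t₀, u t₀))) * hoc7 + ((24) * (F (t₀, u t₀)) * (pd (0,1) (pd (0,1) F) (t₀, u t₀)) * (u t₀) + (16) * (pd (1,0) (pd (0,1) F) (t₀, u t₀)) * (u t₀) + (8) * (pd (0,1) (pd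 (1,0) F) (t₀, u t₀)) * (u t₀)) * heps2 + ((24) * (pd (0,1) F (t₀, u t₀)) * (pd (0,1) F (t₀, u t₀)) * (u t₀)) * heps3
  -- ==== descent ====
  have O4 : P4 =O[𝓝 (0 : ℝ)] fun x => x ^ 1 := by
    have h1 := P4d0.isBigO_sub
    have h2 : (fun y : ℝ => P4 y - P4 0) = P4 := by funext y; rw [e4v, sub_zero]
    have h3 : (fun y : ℝ => y - 0) = fun y : ℝ => y ^ 1 := by
      funext y; rw [sub_zero, pow_one]
    rwa [h2, h3] at h1
  have O0 := descend e0v hdP0 (descend e1v hdP1 (descend e2v hdP2 (descend e3v hdP3 O4)))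
  have O0' : P0 =O[𝓝 (0 : ℝ)] fun x => x ^ 5 := by simpa using O0
  -- ==== conclusion ====
  have hk2fun : k₂ = k2e := by
    funext h
    rw [hk₂ h, hk₁ h]
    simp only [hk2edef, hy2def, hFdef, wf]
  have hk3fun : k₃ = k3e := by
    funext h
    rw [hk₃ h, hk₁ h, hk2fun]
    simp only [hk3edef, hy3def, hg3def, hFdef, wf]
  have hk4fun : k₄ = k4e := by
    funext h
    rw [hk₄ h, hk₁ h, hk2fun, hk3fun]
    simp only [hk4edef, hy4def, hg4def, hFdef, wf]
  have hne : ∀ᶠ (h : ℝ) in 𝓝[≠] (0 : ℝ), h ≠ 0 := eventually_mem_nhdsWithin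
  have Omul := (O0'.mono nhdsWithin_le_nhds).mul
    (isBigO_refl (fun h : ℝ => h⁻¹) (𝓝[≠] (0 : ℝ)))
  refine Omul.congr' ?_ ?_
  · filter_upwards [hne] with h hh
    have hexp : ∀ a b : ℝ, (a - h * b) * h⁻¹ = a / h - b := by
      intro a b
      rw [sub_mul, div_eq_mul_inv, mul_comm h b, mul_assoc, mul_inv_cancel₀ hh, mul_one]
    rw [hk₁ h, hk2fun, hk3fun, hk4fun]
    simp only [hP0def]
    rw [hexp]
    simp only [hKdef, hFdef]
    ring
  · filter_upwards [hne] with h hh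
    rw [pow_succ, mul_assoc, mul_inv_cancel₀ hh, mul_one]
end

section
/- Let reals b₁, b₂, b₃, b₄, c₂, c₃, c₄ and a₃₂, a₄₂, a₄₃ satisfy b₁ + b₂ + b₃ + b₄ = 1 together with the fourth-order conditions: b₂c₂ + b₃c₃ + b₄c₄ = 1/2, b₂c₂² + b₃c₃² + b₄c₄² = 1/3, b₂c₂³ + b₃c₃³ + b₄c₄³ = 1/4, a₃₂b₃c₂ + a₄₂b₄c₂ + a₄₃b₄c₃ = 1/6, a₃₂b₃c₂c₃ + a₄₂b₄c₂c₄ + a₄₃b₄c₃c₄ = 1/8, a₃₂b₃c₂² + a₄₂b₄c₂² + a₄₃b₄c₃² = 1/12, and a₃₂a₄₃b₄c₂ = 1/24. Then necessarily c₄ = 1. -/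
/-!
Eliminating `a₄₂` between the conditions with `a_{ij}` expresses `a₃₂ b₃ c₂ (c₃ - c₄)` and
`a₄₃ b₄ c₃ (c₃ - c₂)` through `c₂, c₄` alone, and the quadrature conditions do the same for
`b₃ c₃ (c₃ - c₂) (c₃ - c₄)`. The first two products multiply to `a₃₂ a₄₃ b₄ c₂ = 1/24` times the
third, and this relation collapses to `c₂ (c₄ - 1) = 0`; finally `c₂ ≠ 0` because `a₃₂ a₄₃ b₄ c₂ ≠ 0`.
-/

theorem stmt_17_general (b₂ b₃ b₄ c₂ c₃ c₄ a₃₂ a₄₂ a₄₃ : ℝ)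
    (hoc1 : b₂ * c₂ + b₃ * c₃ + b₄ * c₄ = 1 / 2)
    (hoc2 : b₂ * c₂ ^ 2 + b₃ * c₃ ^ 2 + b₄ * c₄ ^ 2 = 1 / 3)
    (hoc3 : b₂ * c₂ ^ 3 + b₃ * c₃ ^ 3 + b₄ * c₄ ^ 3 = 1 / 4)
    (hoc4 : a₃₂ * b₃ * c₂ + a₄₂ * b₄ * c₂ + a₄₃ * b₄ * c₃ = 1 / 6)
    (hoc5 : a₃₂ * b₃ * c₂ * c₃ + a₄₂ * b₄ * c₂ * c₄ + a₄₃ * b₄ * c₃ * c₄ = 1 / 8)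
    (hoc6 : a₃₂ * b₃ * c₂ ^ 2 + a₄₂ * b₄ * c₂ ^ 2 + a₄₃ * b₄ * c₃ ^ 2 = 1 / 12)
    (hoc7 : a₃₂ * a₄₃ * b₄ * c₂ = 1 / 24) :
    c₄ = 1 := by
  have hc₂ : c₂ ≠ 0 := by
    rintro rfl
    norm_num at hoc7
  have h₃₂ : a₃₂ * b₃ * c₂ * (c₃ - c₄) = 1 / 8 - c₄ / 6 := by
    linear_combination hoc5 - c₄ * hoc4
  have h₄₃ : a₄₃ * b₄ * c₃ * (c₃ - c₂) = 1 / 12 - c₂ / 6 := by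
    linear_combination hoc6 - c₂ * hoc4
  have hb₃ : b₃ * c₃ * (c₃ - c₂) * (c₃ - c₄) = 1 / 4 - (c₂ + c₄) / 3 + c₂ * c₄ / 2 := by
    linear_combination hoc3 - (c₂ + c₄) * hoc2 + c₂ * c₄ * hoc1
  have hprod : (1 / 8 - c₄ / 6) * (1 / 12 - c₂ / 6)
      = 1 / 24 * (1 / 4 - (c₂ + c₄) / 3 + c₂ * c₄ / 2) := by
    rw [← h₃₂, ← h₄₃, ← hb₃, ← hoc7]
    ring
  have hc₂c₄ : c₂ * (c₄ - 1) = 0 := by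
    linear_combination 144 * hprod
  exact sub_eq_zero.mp ((mul_eq_zero.mp hc₂c₄).resolve_left hc₂)

/-- For a four-stage explicit Runge–Kutta method, the consistency condition
together with the fourth-order conditions forces `c₄ = 1`. -/
theorem stmt_17 (b₁ b₂ b₃ b₄ c₂ c₃ c₄ a₃₂ a₄₂ a₄₃ : ℝ)
    (hb : b₁ + b₂ + b₃ + b₄ = 1)
    (hoc1 : b₂ * c₂ + b₃ * c₃ + b₄ * c₄ = 1 / 2)
    (hoc2 : b₂ * c₂ ^ 2 + b₃ * c₃ ^ 2 + b₄ * c₄ ^ 2 = 1 / 3)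
    (hoc3 : b₂ * c₂ ^ 3 + b₃ * c₃ ^ 3 + b₄ * c₄ ^ 3 = 1 / 4)
    (hoc4 : a₃₂ * b₃ * c₂ + a₄₂ * b₄ * c₂ + a₄₃ * b₄ * c₃ = 1 / 6)
    (hoc5 : a₃₂ * b₃ * c₂ * c₃ + a₄₂ * b₄ * c₂ * c₄ + a₄₃ * b₄ * c₃ * c₄ = 1 / 8)
    (hoc6 : a₃₂ * b₃ * c₂ ^ 2 + a₄₂ * b₄ * c₂ ^ 2 + a₄₃ * b₄ * c₃ ^ 2 = 1 / 12)
    (hoc7 : a₃₂ * a₄₃ * b₄ * c₂ = 1 / 24) :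
    c₄ = 1 :=
  stmt_17_general b₂ b₃ b₄ c₂ c₃ c₄ a₃₂ a₄₂ a₄₃ hoc1 hoc2 hoc3 hoc4 hoc5 hoc6 hoc7
end

section
/- Let λ ∈ ℝ and h ∈ ℝ, and consider the two-stage RBF Runge–Kutta step with coefficients a₂₁ = c₂ = 2/3, b₁ = 1/4, b₂ = 3/4 and shape parameter e = −λ²/2 applied to f(t,u) = λu: for any v ∈ ℝ set k₁ = λv, k₂ = λ(v·exp(−e(2h/3)²) + (2h/3)k₁) and v_new = v + h((1/4)k₁ + (3/4)k₂). Then v_new = R(λh)·v, where R(z) = 1 + (1/4 + (3/4)·exp((2/9)z²))·z + (1/2)z². Moreover, R(z) − e^z = O(z⁴) as z → 0. -/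
/-!
With `e = −λ²/2` the damping factor `exp (−e (2h/3)²)` is `exp ((2/9)(λh)²)`, so the step is
`v ↦ R(λh) v` by direct computation. For the order, `R(z)` differs from the cubic Taylor
polynomial `1 + z + z²/2 + z³/6` of `exp` by `(3/4) z (exp (2z²/9) − 1 − 2z²/9) = O(z⁵)`,
and `exp` differs from that polynomial by `O(z⁴)`.
-/

open Real Filter Asymptotics Topology

lemma Real.exp_sub_taylor_three_isBigO :
    (fun z : ℝ => exp z - (1 + z + z ^ 2 / 2 + z ^ 3 / 6)) =O[𝓝 0] (· ^ 4) := by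
  convert Real.exp_sub_sum_range_isBigO_pow 4 using 3 with z
  simp [Finset.sum_range_succ, Nat.factorial]

lemma Real.exp_mul_sq_sub_isBigO (c : ℝ) :
    (fun z : ℝ => exp (c * z ^ 2) - (1 + c * z ^ 2)) =O[𝓝 0] (· ^ 4) := by
  have hlin : (fun w : ℝ => exp w - (1 + w)) =O[𝓝 0] (· ^ 2) := by
    convert Real.exp_sub_sum_range_isBigO_pow 2 using 3 with w
    simp [Finset.sum_range_succ]
  have hsq : Tendsto (fun z : ℝ => c * z ^ 2) (𝓝 0) (𝓝 0) :=
    (by fun_prop : Continuous fun z : ℝ => c * z ^ 2).tendsto' 0 0 (by simp)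
  refine (hlin.comp_tendsto hsq).trans (IsBigO.of_bound (c ^ 2) ?_)
  filter_upwards with z
  simp only [Function.comp_apply, norm_pow, norm_mul, Real.norm_eq_abs]
  rw [mul_pow, ← pow_mul, sq_abs]

lemma rbfStability_sub_exp_isBigO :
    (fun z : ℝ => 1 + (1 / 4 + (3 / 4) * exp ((2 / 9) * z ^ 2)) * z + (1 / 2) * z ^ 2 - exp z)
      =O[𝓝 0] (· ^ 4) := by
  have hdecomp : ∀ z : ℝ,
      1 + (1 / 4 + (3 / 4) * exp ((2 / 9) * z ^ 2)) * z + (1 / 2) * z ^ 2 - exp z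
        = (3 / 4) * z * (exp ((2 / 9) * z ^ 2) - (1 + (2 / 9) * z ^ 2))
          - (exp z - (1 + z + z ^ 2 / 2 + z ^ 3 / 6)) := fun z => by ring
  simp only [hdecomp]
  refine IsBigO.sub ?_ Real.exp_sub_taylor_three_isBigO
  have hz : (fun z : ℝ => (3 / 4) * z) =O[𝓝 0] (fun _ => (1 : ℝ)) :=
    ((continuous_const.mul continuous_id).tendsto (0 : ℝ)).isBigO_one ℝ
  simpa using hz.mul (Real.exp_mul_sq_sub_isBigO (2 / 9))

/-- Applied to the test problem `u' = λu` with shape parameter `e = −λ²/2`, the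
two-stage RBF Runge–Kutta step with `a₂₁ = c₂ = 2/3`, `b₁ = 1/4`, `b₂ = 3/4`
takes the form `v_new = R(λh)·v` with stability function
`R(z) = 1 + (1/4 + (3/4)exp((2/9)z²))z + (1/2)z²`, and `R(z) − e^z = O(z⁴)` as
`z → 0`. -/
theorem stmt_19 (lam h : ℝ) (e : ℝ) (he : e = -lam ^ 2 / 2) (R : ℝ → ℝ)
    (hR : ∀ z : ℝ, R z = 1 + (1 / 4 + (3 / 4) * Real.exp ((2 / 9) * z ^ 2)) * z
        + (1 / 2) * z ^ 2) :
    (∀ v : ℝ,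
        v + h * ((1 / 4) * (lam * v)
          + (3 / 4) * (lam * (v * Real.exp (-e * (2 * h / 3) ^ 2)
              + (2 * h / 3) * (lam * v))))
          = R (lam * h) * v)
    ∧ (fun z : ℝ => R z - Real.exp z) =O[𝓝 (0 : ℝ)] fun z => z ^ 4 := by
  have hexponent : -e * (2 * h / 3) ^ 2 = (2 / 9) * (lam * h) ^ 2 := by
    rw [he]
    ring
  refine ⟨fun v => ?_, ?_⟩
  · rw [hR, hexponent]
    ring
  · simpa only [hR] using rbfStability_sub_exp_isBigO
end
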